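/- Any B-presheaf on a graph equipped with the topology generated by open stars is automatically a B-sheaf; that is, it satisfies both the locality and gluing conditions with respect to covers by basic open sets. -/

import Mathlib

/-- The open star of a vertex `v`: the vertex together with its incident edges,
viewed as a set of points of the graph (points are vertices and edges). -/
def openStar {V E : Type*} (inc : E → V → Prop) (v : V) : Set (V ⊕ E) :=
  insert (Sum.inl v) {x | ∃ e, x = Sum.inr e ∧ inc e v}

/-- The basic open set corresponding to an edge `e` (the intersection of the open
stars of its endpoints). -/
def edgeOpen {V E : Type*} (e : E) : Set (V ⊕ E) := {Sum.inr e}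

/-- Basic open sets of the star topology on a graph: open stars and the open sets
corresponding to edges. -/
def IsBasic {V E : Type*} (inc : E → V → Prop) (U : Set (V ⊕ E)) : Prop :=
  (∃ v, U = openStar inc v) ∨ (∃ e, U = edgeOpen (V := V) e)

/-- A `B`-presheaf on a graph with the star topology: an assignment of a set of
sections to each basic open set, together with restriction maps satisfying the
identity and composition laws. -/
structure BPresheaf {V E : Type*} (inc : E → V → Prop) where
  F : Set (V ⊕ E) → Type*
  res : ∀ {U W : Set (V ⊕ E)}, IsBasic inc U → IsBasic inc W → W ⊆ U → F U → F W
  res_id : ∀ {U : Set (V ⊕ E)} (hU : IsBasic inc U) (s : F U),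
    res hU hU (subset_refl U) s = s
  res_comp : ∀ {U W T : Set (V ⊕ E)} (hU : IsBasic inc U) (hW : IsBasic inc W)
    (hT : IsBasic inc T) (hWU : W ⊆ U) (hTW : T ⊆ W) (s : F U),
    res hW hT hTW (res hU hW hWU s) = res hU hT (hTW.trans hWU) s

/-!
Every basic open set `U` has a generic point (the vertex of an open star, the edge of an edge
set) lying in no basic open set that does not contain all of `U`. A cover of `U` by basic open
sets must contain this point, hence `U` itself, and restriction to `U` is the identity; so
locality and gluing both hold trivially.
-/

theorem IsBasic.exists_mem_forall_subset {V E : Type*} {inc : E → V → Prop} {U : Set (V ⊕ E)}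
    (hU : IsBasic inc U) : ∃ x ∈ U, ∀ W, IsBasic inc W → x ∈ W → U ⊆ W := by
  rcases hU with ⟨v, rfl⟩ | ⟨e, rfl⟩
  · refine ⟨Sum.inl v, Set.mem_insert _ _, ?_⟩
    rintro W (⟨w, rfl⟩ | ⟨e, rfl⟩) hv
    · rcases hv with h | ⟨e, he, -⟩
      · cases Sum.inl.inj h; exact subset_rfl
      · cases he
    · cases hv
  · exact ⟨Sum.inr e, rfl, fun W _ he => Set.singleton_subset_iff.mpr he⟩

theorem IsBasic.mem_of_sUnion_eq {V E : Type*} {inc : E → V → Prop} {U : Set (V ⊕ E)}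
    (hU : IsBasic inc U) {𝒰 : Set (Set (V ⊕ E))} (h𝒰 : ∀ W ∈ 𝒰, IsBasic inc W)
    (hcover : ⋃₀ 𝒰 = U) : U ∈ 𝒰 := by
  obtain ⟨x, hxU, hx⟩ := hU.exists_mem_forall_subset
  obtain ⟨W, hW, hxW⟩ : x ∈ ⋃₀ 𝒰 := hcover ▸ hxU
  have hWU : W ⊆ U := hcover ▸ Set.subset_sUnion_of_mem hW
  rwa [← hWU.antisymm (hx W (h𝒰 W hW) hxW)]

/-- Any `B`-presheaf on a graph equipped with the topology
generated by open stars is automatically a `B`-sheaf: it satisfies both the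
locality and gluing conditions with respect to covers by basic open sets
(compatibility on overlaps being expressed via all basic open sets contained in
the intersection of two members of the cover). -/
theorem bpresheaf_is_bsheaf {V E : Type*} (inc : E → V → Prop)
    (P : BPresheaf inc) :
    -- locality
    (∀ (U : Set (V ⊕ E)) (hU : IsBasic inc U) (𝒰 : Set (Set (V ⊕ E)))
      (h𝒰 : ∀ W ∈ 𝒰, IsBasic inc W) (hcover : ⋃₀ 𝒰 = U) (s t : P.F U),
      (∀ W (hW : W ∈ 𝒰),
        P.res hU (h𝒰 W hW) ((Set.subset_sUnion_of_mem hW).trans hcover.subset) s =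
        P.res hU (h𝒰 W hW) ((Set.subset_sUnion_of_mem hW).trans hcover.subset) t) →
      s = t) ∧
    -- gluing
    (∀ (U : Set (V ⊕ E)) (hU : IsBasic inc U) (𝒰 : Set (Set (V ⊕ E)))
      (h𝒰 : ∀ W ∈ 𝒰, IsBasic inc W) (hcover : ⋃₀ 𝒰 = U)
      (sec : ∀ W, W ∈ 𝒰 → P.F W),
      (∀ W (hW : W ∈ 𝒰) W' (hW' : W' ∈ 𝒰) (T : Set (V ⊕ E)) (hT : IsBasic inc T)
        (hTW : T ⊆ W) (hTW' : T ⊆ W'),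
        P.res (h𝒰 W hW) hT hTW (sec W hW) =
        P.res (h𝒰 W' hW') hT hTW' (sec W' hW')) →
      ∃ s : P.F U, ∀ W (hW : W ∈ 𝒰),
        P.res hU (h𝒰 W hW) ((Set.subset_sUnion_of_mem hW).trans hcover.subset) s =
          sec W hW) := by
  constructor
  · intro U hU 𝒰 h𝒰 hcover s t hst
    simpa only [P.res_id] using hst U (hU.mem_of_sUnion_eq h𝒰 hcover)
  · intro U hU 𝒰 h𝒰 hcover sec hcompat
    have hUmem : U ∈ 𝒰 := hU.mem_of_sUnion_eq h𝒰 hcover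
    refine ⟨sec U hUmem, fun W hW => ?_⟩
    simpa only [P.res_id] using
      hcompat U hUmem W hW W (h𝒰 W hW) (hcover ▸ Set.subset_sUnion_of_mem hW) subset_rfl
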